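/- The pmf of UNB(r,p) satisfies the recurrence in r: p(x; r, p) = r/((r-1)(r+x)p) * [ (2r + x - (r+x)q) p(x; r+1, p) - (r+1) p(x; r+2, p) ] for r > 1. -/
import Mathlib


open scoped BigOperators

/-- Pochhammer (rising factorial) `(a)_n`. -/
noncomputable def poch (a : ℝ) (n : ℕ) : ℝ := ∏ i ∈ Finset.range n, (a + i)

/-- Gauss hypergeometric function `₂F₁(a,b;c;z)`. -/
noncomputable def F21 (a b c z : ℝ) : ℝ :=
  ∑' n : ℕ, poch a n * poch b n / poch c n * z ^ n / n.factorial

/-- Pmf of the Uniform–Negative Binomial distribution `UNB(r,p)`. -/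
noncomputable def unbPMF (r p : ℝ) (x : ℕ) : ℝ :=
  (1 - p) ^ x * p ^ r / (x + 1) *
    (Real.Gamma (r + x) / (Real.Gamma r * (x.factorial : ℝ))) *
    F21 1 (r + x) (2 + x) (1 - p)

/-- Pmf of the negative binomial distribution `NB(r,p)` (generalized binomial coefficient). -/
noncomputable def nbPMF (r p : ℝ) (n : ℕ) : ℝ :=
  Real.Gamma (r + n) / (Real.Gamma r * (n.factorial : ℝ)) * p ^ r * (1 - p) ^ n

lemma poch_succ (a : ℝ) (n : ℕ) : poch a (n+1) = poch a n * (a + n) :=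
  Finset.prod_range_succ _ _

lemma poch_succ' (a : ℝ) (n : ℕ) : poch a (n+1) = a * poch (a+1) n := by
  unfold poch
  rw [Finset.prod_range_succ']
  rw [mul_comm]
  congr 1
  · simp
  · apply Finset.prod_congr rfl
    intro i _
    push_cast; ring

lemma poch_pos {a : ℝ} (ha : 0 < a) (n : ℕ) : 0 < poch a n := by
  apply Finset.prod_pos; intro i _; positivity

lemma poch_one (n : ℕ) : poch 1 n = n.factorial := by
  induction n with
  | zero => simp [poch]
  | succ m ih => rw [poch_succ, ih]; push_cast [Nat.factorial_succ]; ring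

lemma g_summable {b c z : ℝ} (hb : 0 < b) (hc : 0 < c) (hz0 : 0 ≤ z) (hz1 : z < 1) :
    Summable (fun n : ℕ => poch b n / poch c n * z ^ n) := by
  apply summable_of_ratio_norm_eventually_le (r := (1+z)/2) (by linarith)
  filter_upwards [Filter.eventually_ge_atTop ⌈2*b*z/(1-z)⌉₊] with n hn
  have hn' : 2*b*z/(1-z) ≤ (n:ℝ) := le_trans (Nat.le_ceil _) (by exact_mod_cast hn)
  have h1 : 2*b*z ≤ (n:ℝ)*(1-z) := by
    rw [div_le_iff₀ (by linarith)] at hn'; linarith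
  have hcn : (0:ℝ) < c + n := by positivity
  have hbn : (0:ℝ) < b + n := by positivity
  have hfn : (0:ℝ) ≤ poch b n / poch c n * z ^ n := by
    have := poch_pos hb n; have := poch_pos hc n; positivity
  have hstep : poch b (n+1) / poch c (n+1) * z ^ (n+1)
      = (poch b n / poch c n * z ^ n) * ((b+n)/(c+n) * z) := by
    rw [poch_succ, poch_succ]
    field_simp
    ring
  rw [Real.norm_eq_abs, Real.norm_eq_abs, abs_of_nonneg hfn, abs_of_nonneg (by
    have := poch_pos hb (n+1); have := poch_pos hc (n+1); positivity), hstep]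
  rw [mul_comm ((1+z)/2) _]
  apply mul_le_mul_of_nonneg_left _ hfn
  rw [div_mul_eq_mul_div, div_le_iff₀ hcn]
  nlinarith [mul_nonneg hc.le hz0, mul_nonneg (Nat.cast_nonneg (α := ℝ) n) hz0]

lemma F21_one (b c z : ℝ) (hc : 0 < c) :
    F21 1 b c z = ∑' n : ℕ, poch b n / poch c n * z ^ n := by
  unfold F21
  apply tsum_congr
  intro n
  rw [poch_one]
  have h : (n.factorial : ℝ) ≠ 0 := Nat.cast_ne_zero.2 n.factorial_ne_zero
  have hpc : poch c n ≠ 0 := (poch_pos hc n).ne'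
  field_simp

lemma term_id (b c z : ℝ) (hb : 0 < b) (hc : 0 < c) (m : ℕ) :
    (b - c + 1) * (poch b (m+1) / poch c (m+1) * z ^ (m+1)) =
      (2*b - c + 2) * (poch (b+1) (m+1) / poch c (m+1) * z ^ (m+1))
      - (b+1) * (poch (b+2) (m+1) / poch c (m+1) * z ^ (m+1))
      - b * z * (poch (b+1) m / poch c m * z ^ m)
      + (b+1) * z * (poch (b+2) m / poch c m * z ^ m) := by
  have h1 : poch (b+1) m = poch b m * (b+m) / b := by
    rw [eq_div_iff hb.ne', mul_comm, ← poch_succ, poch_succ']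
  have h2 : poch (b+2) m = poch (b+1) m * (b+1+m) / (b+1) := by
    rw [eq_div_iff (by linarith : b+1 ≠ 0), mul_comm, ← poch_succ,
      show b+2 = (b+1)+1 from by ring, poch_succ']
  have hcm : (0:ℝ) < c + m := by positivity
  have hpcm : poch c m ≠ 0 := (poch_pos hc m).ne'
  rw [poch_succ b, poch_succ (b+1), poch_succ (b+2), poch_succ c, h2, h1]
  field_simp
  ring

lemma contig (b c z : ℝ) (hb : 0 < b) (hc : 0 < c) (hz0 : 0 ≤ z) (hz1 : z < 1) :
    (b - c + 1) * F21 1 b c z =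
      (2*b - c + 2 - b*z) * F21 1 (b+1) c z + (b+1)*(z-1) * F21 1 (b+2) c z := by
  have hb1 : (0:ℝ) < b + 1 := by linarith
  have hb2 : (0:ℝ) < b + 2 := by linarith
  set g : ℕ → ℝ := fun n => poch b n / poch c n * z ^ n with hgdef
  set g1 : ℕ → ℝ := fun n => poch (b+1) n / poch c n * z ^ n with hg1def
  set g2 : ℕ → ℝ := fun n => poch (b+2) n / poch c n * z ^ n with hg2def
  have hg : Summable g := g_summable hb hc hz0 hz1
  have hg1 : Summable g1 := g_summable hb1 hc hz0 hz1
  have hg2 : Summable g2 := g_summable hb2 hc hz0 hz1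
  have hgs : Summable (fun m => g (m+1)) := (summable_nat_add_iff 1).2 hg
  have hg1s : Summable (fun m => g1 (m+1)) := (summable_nat_add_iff 1).2 hg1
  have hg2s : Summable (fun m => g2 (m+1)) := (summable_nat_add_iff 1).2 hg2
  rw [F21_one _ _ _ hc, F21_one _ _ _ hc, F21_one _ _ _ hc]
  have hg0 : g 0 = 1 := by simp [hgdef, poch]
  have hg10 : g1 0 = 1 := by simp [hg1def, poch]
  have hg20 : g2 0 = 1 := by simp [hg2def, poch]
  have split : ∀ (h : ℕ → ℝ), Summable h → ∑' n, h n = h 0 + ∑' m, h (m+1) :=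
    fun h hh => Summable.tsum_eq_zero_add hh
  have key : ∑' m, (b - c + 1) * g (m+1) =
      ∑' m, ((2*b - c + 2) * g1 (m+1) - (b+1) * g2 (m+1)
        - b * z * g1 m + (b+1) * z * g2 m) := by
    apply tsum_congr
    intro m
    exact term_id b c z hb hc m
  have expand : ∑' m, ((2*b - c + 2) * g1 (m+1) - (b+1) * g2 (m+1)
        - b * z * g1 m + (b+1) * z * g2 m)
      = (2*b - c + 2) * (∑' m, g1 (m+1)) - (b+1) * (∑' m, g2 (m+1))
        - b * z * (∑' m, g1 m) + (b+1) * z * (∑' m, g2 m) := by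
    rw [Summable.tsum_add, Summable.tsum_sub, Summable.tsum_sub, tsum_mul_left, tsum_mul_left, tsum_mul_left,
      tsum_mul_left]
    · exact hg1s.mul_left _
    · exact hg2s.mul_left _
    · exact (hg1s.mul_left _).sub (hg2s.mul_left _)
    · exact hg1.mul_left _
    · exact ((hg1s.mul_left _).sub (hg2s.mul_left _)).sub (hg1.mul_left _)
    · exact hg2.mul_left _
  have L : (b - c + 1) * ∑' n, g n = ∑' m, (b - c + 1) * g (m+1) + (b - c + 1) := by
    rw [split g hg, hg0, tsum_mul_left]
    ring
  rw [L, key, expand, split g1 hg1, split g2 hg2, hg10, hg20]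
  ring

theorem stmt5 (r p : ℝ) (hr : 1 < r) (hp0 : 0 < p) (hp1 : p < 1) (x : ℕ) :
    unbPMF r p x =
      r / ((r - 1) * (r + x) * p) *
        ((2 * r + x - (r + x) * (1 - p)) * unbPMF (r + 1) p x -
          (r + 1) * unbPMF (r + 2) p x) := by
  have hb : (0:ℝ) < r + x := by positivity
  have hc : (0:ℝ) < 2 + x := by positivity
  have hkey := contig (r + x) (2 + x) (1 - p) hb hc (by linarith) (by linarith)
  have e1 : r + 1 + (x:ℝ) = (r + x) + 1 := by ring
  have e2 : r + 2 + (x:ℝ) = (r + x) + 2 := by ring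
  have hΓ : Real.Gamma (r + x) ≠ 0 := (Real.Gamma_pos_of_pos hb).ne'
  have hΓr : Real.Gamma r ≠ 0 := (Real.Gamma_pos_of_pos (by linarith)).ne'
  have hG1 : Real.Gamma ((r + x) + 1) = (r + x) * Real.Gamma (r + x) :=
    Real.Gamma_add_one hb.ne'
  have hG2 : Real.Gamma ((r + x) + 2) = ((r + x) + 1) * ((r + x) * Real.Gamma (r + x)) := by
    rw [show (r + x) + 2 = ((r + x) + 1) + 1 from by ring,
      Real.Gamma_add_one (by positivity), hG1]
  have hGr1 : Real.Gamma (r + 1) = r * Real.Gamma r :=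
    Real.Gamma_add_one (by linarith)
  have hGr2 : Real.Gamma (r + 2) = (r + 1) * (r * Real.Gamma r) := by
    rw [show r + 2 = (r + 1) + 1 from by ring, Real.Gamma_add_one (by linarith), hGr1]
  have hp1' : p ^ (r + 1) = p ^ r * p := by
    rw [Real.rpow_add hp0, Real.rpow_one]
  have hp2' : p ^ (r + 2) = p ^ r * p * p := by
    rw [show r + 2 = (r + 1) + 1 from by ring, Real.rpow_add hp0, Real.rpow_one, hp1']
  unfold unbPMF
  rw [e1, e2, hG1, hG2, hGr1, hGr2, hp1', hp2']
  have hF : F21 1 (r + x) (2 + x) (1 - p) =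
      ((2*(r+x) - (2+x) + 2 - (r+x)*(1-p)) * F21 1 ((r+x)+1) (2+x) (1-p)
        + ((r+x)+1)*((1-p)-1) * F21 1 ((r+x)+2) (2+x) (1-p)) / (r - 1) := by
    rw [eq_div_iff (by intro h; apply absurd h; intro h'; linarith : (r:ℝ) - 1 ≠ 0)]
    rw [← hkey]; ring
  rw [hF]
  have hx1 : ((x:ℝ) + 1) ≠ 0 := by positivity
  have hxf : ((x.factorial : ℝ)) ≠ 0 := Nat.cast_ne_zero.2 x.factorial_ne_zero
  have hrm1 : (r:ℝ) - 1 ≠ 0 := by intro h; linarith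
  have hr0 : (r:ℝ) ≠ 0 := by linarith
  have hr1 : (r:ℝ) + 1 ≠ 0 := by linarith
  have hpr : p ^ r ≠ 0 := (Real.rpow_pos_of_pos hp0 r).ne'
  field_simp
  ring
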